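/- For any base b ≥ 2, any letter x ∈ {1,...,b-1}, and any word u over {0,...,b-1}, the number of words in L_b occurring as scattered subwords of xx0u equals the number of words in L_b occurring as scattered subwords of x0u plus the number of words in L_b occurring as scattered subwords of xu. -/

import Mathlib

/-- Number of distinct words in `L_b` (no leading zero, or empty) occurring as
scattered subwords (subsequences) of `u`. -/
def lbCount (u : List ℕ) : ℕ :=
  ((u.sublists.filter (fun v => v.head? ≠ some 0)).dedup).length

/-- `S_b(n)`: number of distinct words of `L_b` occurring as scattered subwords of
the base-`b` expansion of `n` (most significant digit first, `rep_b(0) = ε`). -/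
def Sb (b n : ℕ) : ℕ := lbCount ((Nat.digits b n).reverse)

/-- Summatory function `A_b(n) = ∑_{j<n} S_b(j)`. -/
def Asum (b n : ℕ) : ℕ := ∑ j ∈ Finset.range n, Sb b j

/-!
Write `S(u)` for the set of distinct subwords of `u` and `E_a(u)` for the set of words `t` with
`a t` a subword of `u`. Splitting the subwords of `a v` by whether they begin with an `a` taken
from the front gives the classical recurrence `|S(a v)| = 2 |S(v)| - |E_a(v)|`, and the words of
`L_b` among the subwords of `u` are those not of the form `0 t`, so their number is
`|S(u)| - |E_0(u)|`. Since `E_a(c v) = E_a(v)` for `c ≠ a` and `E_a(a v) = S(v)`, both sides of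
the identity unfold to the same linear combination of `|S(u)|`, `|E_0(u)|` and `|E_x(u)|`.
-/

open List Finset

variable {α : Type*} [DecidableEq α]

def subwords (u : List α) : Finset (List α) := u.sublists.toFinset

def consSubwords (a : α) (u : List α) : Finset (List α) :=
  (subwords u).filter (fun t => a :: t <+ u)

@[simp] lemma mem_subwords {v u : List α} : v ∈ subwords u ↔ v <+ u := by
  simp [subwords]

@[simp] lemma mem_consSubwords {a : α} {t u : List α} : t ∈ consSubwords a u ↔ a :: t <+ u := by
  simpa [consSubwords] using fun h => (sublist_cons_self a t).trans h

lemma consSubwords_cons_self (a : α) (v : List α) : consSubwords a (a :: v) = subwords v := by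
  ext t
  simp

lemma consSubwords_cons_of_ne {a c : α} (h : a ≠ c) (v : List α) :
    consSubwords a (c :: v) = consSubwords a v := by
  ext t
  simp [sublist_cons_iff, h]

lemma card_subwords_cons (a : α) (v : List α) :
    #(subwords (a :: v)) + #(consSubwords a v) = 2 * #(subwords v) := by
  have hunion : subwords (a :: v) = subwords v ∪ (subwords v).image (a :: ·) := by
    ext w
    simp [sublist_cons_iff, and_comm, eq_comm]
  have hinter : subwords v ∩ (subwords v).image (a :: ·) = (consSubwords a v).image (a :: ·) := by
    ext w
    simp only [mem_inter, mem_image, mem_subwords, mem_consSubwords]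
    constructor
    · rintro ⟨hw, t, -, rfl⟩
      exact ⟨t, hw, rfl⟩
    · rintro ⟨t, ht, rfl⟩
      exact ⟨ht, t, (sublist_cons_self a t).trans ht, rfl⟩
  have hcard := card_union_add_card_inter (subwords v) ((subwords v).image (a :: ·))
  rw [← hunion, hinter, card_image_of_injective _ cons_injective,
    card_image_of_injective _ cons_injective] at hcard
  omega

lemma lbCount_add_card_consSubwords_zero (u : List ℕ) :
    lbCount u + #(consSubwords 0 u) = #(subwords u) := by
  have hlb : lbCount u = #((subwords u).filter (fun w => w.head? ≠ some 0)) := by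
    rw [lbCount, ← List.card_toFinset, List.toFinset_filter, subwords]
    simp
  have hzero : (subwords u).filter (fun w => ¬ w.head? ≠ some 0) =
      (consSubwords 0 u).image (0 :: ·) := by
    ext w
    simp only [Finset.mem_filter, mem_subwords, ne_eq, not_not, Finset.mem_image,
      mem_consSubwords]
    constructor
    · rintro ⟨hw, hhead⟩
      obtain ⟨t, rfl⟩ : ∃ t, w = 0 :: t := by
        rcases w with _ | ⟨c, t⟩ <;> simp_all
      exact ⟨t, hw, rfl⟩
    · rintro ⟨t, ht, rfl⟩
      exact ⟨ht, rfl⟩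
  rw [hlb, ← card_image_of_injective (consSubwords 0 u) cons_injective, ← hzero]
  exact card_filter_add_card_filter_not _

theorem stmt1_general (x : ℕ) (hx : 1 ≤ x)
    (u : List ℕ) :
    lbCount (x :: x :: 0 :: u) =
      lbCount (x :: 0 :: u) + lbCount (x :: u) := by
  have hx0 : 0 ≠ x := by omega
  have e₁ := lbCount_add_card_consSubwords_zero (x :: x :: 0 :: u)
  have e₂ := lbCount_add_card_consSubwords_zero (x :: 0 :: u)
  have e₃ := lbCount_add_card_consSubwords_zero (x :: u)
  rw [consSubwords_cons_of_ne hx0, consSubwords_cons_of_ne hx0, consSubwords_cons_self] at e₁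
  rw [consSubwords_cons_of_ne hx0, consSubwords_cons_self] at e₂
  rw [consSubwords_cons_of_ne hx0] at e₃
  have s₁ := card_subwords_cons x (x :: 0 :: u)
  have s₂ := card_subwords_cons x (0 :: u)
  have s₃ := card_subwords_cons 0 u
  have s₄ := card_subwords_cons x u
  rw [consSubwords_cons_self] at s₁
  rw [consSubwords_cons_of_ne hx0.symm] at s₂
  omega

theorem stmt1 (b x : ℕ) (hb : 2 ≤ b) (hx : 1 ≤ x) (hxb : x < b)
    (u : List ℕ) (hu : ∀ d ∈ u, d < b) :
    lbCount (x :: x :: 0 :: u) =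
      lbCount (x :: 0 :: u) + lbCount (x :: u) :=
  stmt1_general x hx u
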